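/- Fix θ̄ ∈ (0,π/2). As k → 0, the Z-invariant Ising coupling constant satisfies the expansion J(θ̄|k) = J(θ̄|0) + (k²/8)·sin(θ̄) + O(k⁴), where J(θ̄|k) = (1/2)·log((1 + sn(θ̄·2K(k)/π | k))/cn(θ̄·2K(k)/π | k)) and J(θ̄|0) = (1/2)·log((1 + sin θ̄)/cos θ̄). (This expansion takes into account that θ = θ̄·2K(k)/π itself depends on k, and identifies k² with the deviation β − β_c from the critical inverse temperature.) -/

import Mathlib

/-!
Write `m = k²` and `F_m(φ) = ∫₀^φ (1 - m sin² t)^{-1/2} dt`. Pointwise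
`(1 - m sin² t)^{-1/2} = 1 + (m/2) sin² t + O(m²)` and the integrand is at least `1`, so
`F_m(φ) = φ + (m/2) ∫₀^φ sin² + O(m² φ)`, `F_m(b) - F_m(a) = (b - a)(1 + O(m))` and
`|F_m(b) - F_m(a)| ≥ |b - a|`. Hence `K = π/2 + mπ/8 + O(m²)`, and the amplitude
`φ = am(θ̄·2K/π)` satisfies first `φ = θ̄ + O(m)` and then `φ = θ̄ + (m/4) sin θ̄ cos θ̄ + O(m²)`.
Finally `x ↦ (1/2) log((1 + sin x)/cos x)` has derivative `1/(2 cos x)`, and its second-order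
Taylor bound at `θ̄` turns this into `J(θ̄|k) - J(θ̄|0) = (m/8) sin θ̄ + O(m²)`.
-/

open Real Filter

/-- Complete elliptic integral of the first kind `K`, as a function of the
squared modulus `m = k²`. -/
noncomputable def ellK (m : ℝ) : ℝ :=
  ∫ τ in (0:ℝ)..(π/2), 1 / Real.sqrt (1 - m * Real.sin τ ^ 2)

/-- The incomplete elliptic integral of the first kind
`φ ↦ ∫₀^φ (1 - k² sin² t)^{-1/2} dt`, as a function of the squared modulus `m = k²`. -/
noncomputable def amF (m φ : ℝ) : ℝ :=
  ∫ t in (0:ℝ)..φ, 1 / Real.sqrt (1 - m * Real.sin t ^ 2)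

/-- Jacobi's amplitude, the inverse of `amF m`, squared modulus `m = k²`. -/
noncomputable def am (m u : ℝ) : ℝ := Function.invFun (amF m) u

/-- Jacobi elliptic function `sn`, squared modulus `m = k²`. -/
noncomputable def sn (u m : ℝ) : ℝ := Real.sin (am m u)

/-- Jacobi elliptic function `cn`, squared modulus `m = k²`. -/
noncomputable def cn (u m : ℝ) : ℝ := Real.cos (am m u)

/-- Jacobi elliptic function `dn`, squared modulus `m = k²`. -/
noncomputable def dn (u m : ℝ) : ℝ := Real.sqrt (1 - m * sn u m ^ 2)

/-- Jacobi elliptic function `sc = sn/cn`, squared modulus `m = k²`. -/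
noncomputable def sc (u m : ℝ) : ℝ := sn u m / cn u m

open Asymptotics

open MeasureTheory intervalIntegral Topology

noncomputable def ellIntegrand (m t : ℝ) : ℝ := 1 / √(1 - m * sin t ^ 2)

lemma one_sub_mul_sin_sq_pos {m : ℝ} (hm : m < 1) (t : ℝ) : 0 < 1 - m * sin t ^ 2 := by
  rcases le_total 0 m with h | h
  · nlinarith [sin_sq_le_one t]
  · nlinarith [sq_nonneg (sin t)]

lemma continuous_ellIntegrand {m : ℝ} (hm : m < 1) : Continuous (ellIntegrand m) :=
  continuous_const.div (by fun_prop) fun t => (sqrt_pos.2 (one_sub_mul_sin_sq_pos hm t)).ne'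

lemma amF_sub_amF {m : ℝ} (hm : m < 1) (a b : ℝ) :
    amF m b - amF m a = ∫ t in a..b, ellIntegrand m t :=
  integral_interval_sub_left ((continuous_ellIntegrand hm).intervalIntegrable _ _)
    ((continuous_ellIntegrand hm).intervalIntegrable _ _)

lemma one_le_ellIntegrand {m : ℝ} (hm0 : 0 ≤ m) (hm1 : m < 1) (t : ℝ) : 1 ≤ ellIntegrand m t := by
  have hpos := one_sub_mul_sin_sq_pos hm1 t
  rw [ellIntegrand, le_div_iff₀ (sqrt_pos.2 hpos), one_mul, sqrt_le_one]
  nlinarith [sq_nonneg (sin t)]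

lemma sub_le_amF_sub_amF {m a b : ℝ} (hm0 : 0 ≤ m) (hm1 : m < 1) (hab : a ≤ b) :
    b - a ≤ amF m b - amF m a := by
  rw [amF_sub_amF hm1]
  simpa using integral_mono_on (μ := volume) hab intervalIntegrable_const
    ((continuous_ellIntegrand hm1).intervalIntegrable a b)
    fun t _ => one_le_ellIntegrand hm0 hm1 t

lemma abs_sub_le_abs_amF_sub_amF {m : ℝ} (hm0 : 0 ≤ m) (hm1 : m < 1) (a b : ℝ) :
    |b - a| ≤ |amF m b - amF m a| := by
  rcases le_total a b with hab | hab
  · have := sub_le_amF_sub_amF hm0 hm1 hab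
    rw [abs_of_nonneg (sub_nonneg.2 hab)]
    exact this.trans (le_abs_self _)
  · have := sub_le_amF_sub_amF hm0 hm1 hab
    rw [abs_sub_comm, abs_of_nonneg (sub_nonneg.2 hab), abs_sub_comm]
    exact this.trans (le_abs_self _)

lemma amF_surjective {m : ℝ} (hm0 : 0 ≤ m) (hm1 : m < 1) : Function.Surjective (amF m) := by
  have hzero : amF m 0 = 0 := integral_same
  have hcont : Continuous (amF m) :=
    continuous_primitive (fun a b => (continuous_ellIntegrand hm1).intervalIntegrable a b) 0
  refine hcont.surjective ?_ ?_
  · refine tendsto_atTop_mono' _ ?_ tendsto_id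
    filter_upwards [eventually_ge_atTop 0] with x hx
    simpa [hzero] using sub_le_amF_sub_amF hm0 hm1 hx
  · refine tendsto_atBot_mono' _ ?_ tendsto_id
    filter_upwards [eventually_le_atBot 0] with x hx
    simpa [hzero] using sub_le_amF_sub_amF hm0 hm1 hx

lemma amF_am {m : ℝ} (hm0 : 0 ≤ m) (hm1 : m < 1) (u : ℝ) : amF m (am m u) = u :=
  Function.invFun_eq (amF_surjective hm0 hm1 u)

lemma abs_one_div_sqrt_one_sub_sub_le {x : ℝ} (h1 : x ≤ 1 / 2) :
    |1 / √(1 - x) - 1 - x / 2| ≤ 3 * x ^ 2 := by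
  set s := √(1 - x)
  have hs2 : s ^ 2 = 1 - x := sq_sqrt (by linarith)
  have hs : 7 / 10 ≤ s := le_sqrt_of_sq_le (by linarith)
  have hkey : (2 - s * (2 + x)) * (2 + s * (2 + x)) = 3 * x ^ 2 + x ^ 3 := by
    linear_combination (-(2 + x) ^ 2) * hs2
  have hnum0 : 0 ≤ 2 - s * (2 + x) := by nlinarith
  have hnum : 2 - s * (2 + x) ≤ 2 * x ^ 2 := by nlinarith
  have heq : 1 / s - 1 - x / 2 = (2 - s * (2 + x)) / (2 * s) := by field_simp; ring
  rw [heq, abs_of_nonneg (by positivity), div_le_iff₀ (by positivity)]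
  nlinarith

lemma abs_ellIntegrand_sub_le {m : ℝ} (hm : m ≤ 1 / 2) (t : ℝ) :
    |ellIntegrand m t - 1 - m / 2 * sin t ^ 2| ≤ 3 * m ^ 2 := by
  have hs0 := sq_nonneg (sin t)
  have hs1 := sin_sq_le_one t
  have hx : m * sin t ^ 2 ≤ 1 / 2 := by
    rcases le_total 0 m with h | h <;> nlinarith
  calc |ellIntegrand m t - 1 - m / 2 * sin t ^ 2| ≤ 3 * (m * sin t ^ 2) ^ 2 := by
        simpa [ellIntegrand, mul_div_right_comm] using abs_one_div_sqrt_one_sub_sub_le hx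
    _ ≤ 3 * m ^ 2 := by
        rw [mul_pow]
        nlinarith [sq_nonneg m, pow_le_one₀ hs0 hs1 (n := 2)]

lemma abs_ellIntegrand_sub_one_le {m : ℝ} (hm0 : 0 ≤ m) (hm : m ≤ 1 / 2) (t : ℝ) :
    |ellIntegrand m t - 1| ≤ 2 * m := by
  have h := abs_ellIntegrand_sub_le hm t
  have hs : |m / 2 * sin t ^ 2| ≤ m / 2 := by
    rw [abs_of_nonneg (by positivity)]
    nlinarith [sin_sq_le_one t]
  calc |ellIntegrand m t - 1|
      = |(ellIntegrand m t - 1 - m / 2 * sin t ^ 2) + m / 2 * sin t ^ 2| := by ring_nf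
    _ ≤ |ellIntegrand m t - 1 - m / 2 * sin t ^ 2| + |m / 2 * sin t ^ 2| := abs_add_le _ _
    _ ≤ 2 * m := by nlinarith

lemma abs_amF_sub_amF_sub_le {m : ℝ} (hm0 : 0 ≤ m) (hm : m ≤ 1 / 2) (a b : ℝ) :
    |amF m b - amF m a - (b - a)| ≤ 2 * m * |b - a| := by
  have hm1 : m < 1 := by linarith
  have heq : amF m b - amF m a - (b - a) = ∫ t in a..b, (ellIntegrand m t - 1) := by
    rw [amF_sub_amF hm1, integral_sub ((continuous_ellIntegrand hm1).intervalIntegrable a b)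
      intervalIntegrable_const]
    simp
  rw [heq]
  exact intervalIntegral.norm_integral_le_of_norm_le_const
    (f := fun t => ellIntegrand m t - 1) fun t _ => abs_ellIntegrand_sub_one_le hm0 hm t

lemma abs_amF_sub_sub_le {m : ℝ} (hm : m ≤ 1 / 2) (x : ℝ) :
    |amF m x - x - m / 2 * ∫ t in 0..x, sin t ^ 2| ≤ 3 * m ^ 2 * |x| := by
  have hm1 : m < 1 := by linarith
  have heq : amF m x - x - m / 2 * ∫ t in 0..x, sin t ^ 2
      = ∫ t in 0..x, (ellIntegrand m t - 1 - m / 2 * sin t ^ 2) := by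
    rw [integral_sub (((continuous_ellIntegrand hm1).intervalIntegrable 0 x).sub
        intervalIntegrable_const)
        ((by fun_prop : Continuous fun t => m / 2 * sin t ^ 2).intervalIntegrable 0 x),
      integral_sub ((continuous_ellIntegrand hm1).intervalIntegrable 0 x) intervalIntegrable_const,
      intervalIntegral.integral_const_mul]
    simp [amF, ellIntegrand]
  rw [heq]
  simpa [← Real.norm_eq_abs] using intervalIntegral.norm_integral_le_of_norm_le_const (a := 0)
    (b := x) (f := fun t => ellIntegrand m t - 1 - m / 2 * sin t ^ 2) fun t _ =>
    abs_ellIntegrand_sub_le hm t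

lemma eventually_nonneg_le_half : ∀ᶠ m in 𝓝[≥] (0 : ℝ), 0 ≤ m ∧ m ≤ 1 / 2 := by
  filter_upwards [self_mem_nhdsWithin,
    nhdsWithin_le_nhds (gt_mem_nhds (by norm_num : (0 : ℝ) < 1 / 2))] with m h0 h1
  exact ⟨h0, h1.le⟩

lemma amF_sub_isBigO (x : ℝ) :
    (fun m => amF m x - x - m / 2 * ∫ t in 0..x, sin t ^ 2) =O[𝓝[≥] 0] fun m => m ^ 2 := by
  refine IsBigO.of_bound (3 * |x|) ?_
  filter_upwards [eventually_nonneg_le_half] with m hm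
  rw [Real.norm_eq_abs, Real.norm_eq_abs, abs_of_nonneg (sq_nonneg m)]
  linarith [abs_amF_sub_sub_le hm.2 x]

lemma ellK_sub_isBigO : (fun m => ellK m - π / 2 - m * π / 8) =O[𝓝[≥] 0] fun m => m ^ 2 := by
  have hI : ∫ t in 0..π / 2, sin t ^ 2 = π / 4 := by simp [integral_sin_sq]; ring
  refine (amF_sub_isBigO (π / 2)).congr_left fun m => ?_
  rw [hI, show amF m (π / 2) = ellK m from rfl]
  ring

lemma rescaled_sub_amF_isBigO (θ : ℝ) :
    (fun m => θ * (2 * ellK m) / π - amF m θ - m * (sin θ * cos θ) / 4)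
      =O[𝓝[≥] 0] fun m => m ^ 2 := by
  refine ((ellK_sub_isBigO.const_mul_left (2 * θ / π)).sub (amF_sub_isBigO θ)).congr_left
    fun m => ?_
  rw [integral_sin_sq, sin_zero, zero_mul, zero_sub]
  field_simp
  ring

lemma am_sub_isBigO (θ : ℝ) :
    (fun m => am m (θ * (2 * ellK m) / π) - θ) =O[𝓝[≥] 0] fun m => m := by
  have hD : (fun m => θ * (2 * ellK m) / π - amF m θ) =O[𝓝[≥] 0] fun m => m := by
    have hsq : (fun m : ℝ => m ^ 2) =O[𝓝[≥] 0] fun m => m :=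
      (isLittleO_pow_id (by norm_num : 1 < 2)).isBigO.mono nhdsWithin_le_nhds
    refine ((rescaled_sub_amF_isBigO θ).trans hsq).add
      ((isBigO_refl (fun m : ℝ => m) _).const_mul_left (sin θ * cos θ / 4)) |>.congr_left
      fun m => ?_
    ring
  refine IsBigO.trans (IsBigO.of_bound 1 ?_) hD
  filter_upwards [eventually_nonneg_le_half] with m hm
  have h := abs_sub_le_abs_amF_sub_amF hm.1 (by linarith [hm.2]) θ (am m (θ * (2 * ellK m) / π))
  rw [amF_am hm.1 (by linarith [hm.2])] at h
  simpa using h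

lemma am_isBigO (θ : ℝ) :
    (fun m => am m (θ * (2 * ellK m) / π) - θ - m * (sin θ * cos θ) / 4)
      =O[𝓝[≥] 0] fun m => m ^ 2 := by
  set φ := fun m => am m (θ * (2 * ellK m) / π)
  have hlin : (fun m => (φ m - θ) - (amF m (φ m) - amF m θ))
      =O[𝓝[≥] 0] fun m => m * (φ m - θ) := by
    refine IsBigO.of_bound 2 ?_
    filter_upwards [eventually_nonneg_le_half] with m hm
    rw [Real.norm_eq_abs, Real.norm_eq_abs, abs_sub_comm, abs_mul, abs_of_nonneg hm.1, ← mul_assoc]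
    exact abs_amF_sub_amF_sub_le hm.1 hm.2 θ (φ m)
  have hquad : (fun m => (φ m - θ) - (amF m (φ m) - amF m θ)) =O[𝓝[≥] 0] fun m => m ^ 2 :=
    (hlin.trans ((isBigO_refl (fun m : ℝ => m) _).mul (am_sub_isBigO θ))).congr_right
      fun m => (sq m).symm
  refine (hquad.add (rescaled_sub_amF_isBigO θ)).congr' ?_ .rfl
  filter_upwards [eventually_nonneg_le_half] with m hm
  have hu : amF m (φ m) = θ * (2 * ellK m) / π := amF_am hm.1 (by linarith [hm.2]) _
  linear_combination -hu

theorem isBigO_sub_pow_succ_of_hasDerivAt {E : Type*} [NormedAddCommGroup E] [NormedSpace ℝ E]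
    {f f' : ℝ → E} {x₀ : ℝ} {n : ℕ} (hf : ∀ᶠ x in 𝓝 x₀, HasDerivAt f (f' x) x)
    (hf' : f' =O[𝓝 x₀] fun x => (x - x₀) ^ n) :
    (fun x => f x - f x₀) =O[𝓝 x₀] fun x => (x - x₀) ^ (n + 1) := by
  obtain ⟨C, hC0, hC⟩ := hf'.exists_nonneg
  obtain ⟨ε, hε, hball⟩ := Metric.eventually_nhds_iff_ball.1 (hf.and hC.bound)
  refine IsBigO.of_bound C ?_
  filter_upwards [Metric.ball_mem_nhds x₀ hε] with x hx
  have hseg : segment ℝ x₀ x ⊆ Metric.ball x₀ ε :=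
    (convex_ball x₀ ε).segment_subset (Metric.mem_ball_self hε) hx
  have hmvt := (convex_segment x₀ x).norm_image_sub_le_of_norm_hasDerivWithin_le
    (fun y hy => (hball y (hseg hy)).1.hasDerivWithinAt)
    (fun y hy => (hball y (hseg hy)).2.trans (mul_le_mul_of_nonneg_left (by
      simpa only [norm_pow] using pow_le_pow_left₀ (norm_nonneg _)
        (norm_sub_le_of_mem_segment hy) n) hC0))
    (left_mem_segment ℝ x₀ x) (right_mem_segment ℝ x₀ x)
  rw [norm_pow, pow_succ, ← mul_assoc]
  simpa only [norm_pow] using hmvt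

theorem isBigO_sub_sub_mul_sq_of_hasDerivAt {f f' : ℝ → ℝ} {x₀ : ℝ}
    (hf : ∀ᶠ x in 𝓝 x₀, HasDerivAt f (f' x) x) (hf' : DifferentiableAt ℝ f' x₀) :
    (fun x => f x - f x₀ - f' x₀ * (x - x₀)) =O[𝓝 x₀] fun x => (x - x₀) ^ 2 := by
  have hlin : ∀ᶠ x in 𝓝 x₀, HasDerivAt (fun x => f x - f' x₀ * x) (f' x - f' x₀) x := by
    filter_upwards [hf] with x hx
    simpa using hx.fun_sub ((hasDerivAt_id x).const_mul (f' x₀))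
  refine (isBigO_sub_pow_succ_of_hasDerivAt (n := 1) hlin ?_).congr_left fun x => by ring
  simpa using hf'.hasDerivAt.isBigO_sub

lemma hasDerivAt_half_log_one_add_sin_div_cos {x : ℝ} (hx : cos x ≠ 0) :
    HasDerivAt (fun x => 1 / 2 * log ((1 + sin x) / cos x)) (1 / (2 * cos x)) x := by
  have hsin : 1 + sin x ≠ 0 := by
    intro h
    have := sin_sq_add_cos_sq x
    rw [show sin x = -1 by linarith] at this
    exact hx (by nlinarith)
  have h := ((((hasDerivAt_sin x).const_add 1).div (hasDerivAt_cos x) hx).log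
    (div_ne_zero hsin hx)).const_mul (1 / 2)
  simp only [Pi.div_apply] at h
  refine h.congr_deriv ?_
  field_simp
  linear_combination sin_sq_add_cos_sq x

/-- Expansion of the Z-invariant Ising coupling constant near criticality:
`J(θ̄|k) = J(θ̄|0) + (k²/8)·sin θ̄ + O(k⁴)` as `k → 0`,
with `J(θ̄|0) = (1/2)·log((1+sin θ̄)/cos θ̄)`. -/
theorem Jcoupling_expansion_near_critical (θbar : ℝ) (hθ : θbar ∈ Set.Ioo 0 (π / 2)) :
    (fun k : ℝ =>
        (1 / 2) * Real.log
          ((1 + sn (θbar * (2 * ellK (k ^ 2)) / π) (k ^ 2)) /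
            cn (θbar * (2 * ellK (k ^ 2)) / π) (k ^ 2))
        - (1 / 2) * Real.log ((1 + Real.sin θbar) / Real.cos θbar)
        - (k ^ 2 / 8) * Real.sin θbar)
      =O[nhds 0] (fun k : ℝ => k ^ 4) := by
  have hcos : 0 < cos θbar := cos_pos_of_mem_Ioo ⟨by linarith [hθ.1, pi_pos], hθ.2⟩
  set J := fun x => 1 / 2 * log ((1 + sin x) / cos x)
  have hJ : (fun x => J x - J θbar - 1 / (2 * cos θbar) * (x - θbar))
      =O[𝓝 θbar] fun x => (x - θbar) ^ 2 :=
    isBigO_sub_sub_mul_sq_of_hasDerivAt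
      ((continuous_cos.continuousAt.eventually_ne hcos.ne').mono fun x hx =>
        hasDerivAt_half_log_one_add_sin_div_cos hx)
      ((differentiableAt_const _).div (by fun_prop) (by positivity))
  set φ := fun m => am m (θbar * (2 * ellK m) / π)
  have hφ₁ := am_sub_isBigO θbar
  have hφ₂ := am_isBigO θbar
  have hφ : Tendsto φ (𝓝[≥] 0) (𝓝 θbar) := tendsto_sub_nhds_zero_iff.1 <|
    hφ₁.trans_tendsto (tendsto_id.mono_left nhdsWithin_le_nhds)
  have hm : (fun m => J (φ m) - J θbar - m / 8 * sin θbar) =O[𝓝[≥] 0] fun m => m ^ 2 := by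
    refine (((hJ.comp_tendsto hφ).trans (hφ₁.pow 2)).add
      (hφ₂.const_mul_left (1 / (2 * cos θbar)))).congr_left fun m => ?_
    have hc : 1 / (2 * cos θbar) * (m * (sin θbar * cos θbar) / 4) = m / 8 * sin θbar := by
      field_simp
      ring
    simp only [Function.comp]
    linear_combination -hc
  have hk : Tendsto (fun k : ℝ => k ^ 2) (𝓝 0) (𝓝[≥] 0) :=
    tendsto_nhdsWithin_iff.2 ⟨by simpa using (continuous_pow 2).tendsto (0 : ℝ),
      .of_forall fun k => sq_nonneg k⟩
  exact (hm.comp_tendsto hk).congr_right fun k => by simp only [Function.comp]; ring
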